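/- Let F be a totally real number field of degree n with real embeddings τ_1,…,τ_n, and Γ a finite-index subgroup of the totally positive units O_F^{+,×}, acting on the formal power series ring ℂ[[z_1,…,z_n]] by ℂ-algebra automorphisms with u · z_i = τ_i(u) z_i, so that the coefficient of the monomial of multidegree d ∈ ℕ^n in u·f is ∏_i τ_i(u)^{d_i} times that of f. Then a power series f is Γ-invariant if and only if its coefficient at every multidegree d with d not constant (i.e. not of the form (k,…,k)) vanishes; that is, the invariant subring ℂ[[z_1,…,z_n]]^Γ equals ℂ[[w]], the image of the one-variable power series ring under w ↦ z_1⋯z_n. -/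

import Mathlib

open NumberField

/-- The subgroup of totally positive units of the ring of integers of `F`, with respect to a
family `τ` of real embeddings of `F`. -/
noncomputable def totPosUnits (F : Type*) [Field F] [NumberField F] {n : ℕ}
    (τ : Fin n → (F →+* ℝ)) : Subgroup (𝓞 F)ˣ where
  carrier := {u | ∀ i, 0 < τ i (algebraMap (𝓞 F) F u)}
  one_mem' := fun i => by simp
  mul_mem' := fun {a b} ha hb i => by
    rw [Units.val_mul, map_mul, map_mul]
    exact mul_pos (ha i) (hb i)
  inv_mem' := fun {u} hu i => by
    have h1 : τ i (algebraMap (𝓞 F) F u) * τ i (algebraMap (𝓞 F) F ↑u⁻¹) = 1 := by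
      rw [← map_mul, ← map_mul, Units.mul_inv, map_one, map_one]
    nlinarith [hu i]

/-- The action of an `n`-tuple of nonzero reals on `ℂ[[z_1, …, z_n]]`, multiplying the
coefficient at multidegree `d` by `∏ i, r_i^{d_i}`; for `r = (τ_i(u))_i` this is the action
`u · z_i = τ_i(u) z_i` of a totally positive unit. -/
noncomputable def diagAct {n : ℕ} (r : Fin n → ℝ) (f : MvPowerSeries (Fin n) ℂ) :
    MvPowerSeries (Fin n) ℂ :=
  fun d => (∏ i, ((r i : ℝ) : ℂ) ^ (d i)) * MvPowerSeries.coeff d f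

/-!
A monomial of multidegree `d` is fixed by `u` iff `∏ i, τ_i(u)^{d_i} = 1`. For constant
`d = (k,…,k)` this is `N(u)^k = 1`, true for every totally positive unit. Conversely, if
`∏ i, τ_i(u)^{d_i} = 1` on `Γ`, then, since `Γ` has finite index, taking logarithms shows that
the linear form `x ↦ ∑ i, d_i x_i` vanishes on the logarithmic image of all units. By Dirichlet's
unit theorem this image spans the hyperplane `∑ i, x_i = 0`, so `d` is proportional to `(1,…,1)`.
-/

namespace MvPowerSeries

theorem exists_coeff_eq_ite_iff {σ R : Type*} [Finite σ] [Semiring R]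
    [DecidablePred fun d : σ →₀ ℕ => ∀ i j, d i = d j] (f : MvPowerSeries σ R) (i₀ : σ) :
    (∃ c : ℕ → R, ∀ d : σ →₀ ℕ, coeff d f = if ∀ i j, d i = d j then c (d i₀) else 0) ↔
      ∀ d : σ →₀ ℕ, ¬(∀ i j, d i = d j) → coeff d f = 0 := by
  refine ⟨fun ⟨c, hc⟩ d hd => by rw [hc d, if_neg hd], fun h => ?_⟩
  refine ⟨fun k => coeff (Finsupp.equivFunOnFinite.symm fun _ => k) f, fun d => ?_⟩
  split_ifs with hd
  · congr
    ext i
    simpa using hd i i₀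
  · exact h d hd

end MvPowerSeries

theorem diagAct_eq_self_iff {n : ℕ} (r : Fin n → ℝ) (f : MvPowerSeries (Fin n) ℂ) :
    diagAct r f = f ↔ ∀ d, MvPowerSeries.coeff d f ≠ 0 → ∏ i, r i ^ d i = 1 := by
  rw [MvPowerSeries.ext_iff]
  refine forall_congr' fun d => ?_
  change (∏ i, ((r i : ℝ) : ℂ) ^ d i) * _ = _ ↔ _
  by_cases h0 : MvPowerSeries.coeff d f = 0
  · simp [h0]
  · rw [mul_eq_right₀ h0]
    simp only [h0, ne_eq, not_false_eq_true, forall_const]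
    exact_mod_cast Iff.rfl

namespace NumberField.Units

open InfinitePlace dirichletUnitTheorem

variable {K : Type*} [Field K] [NumberField K]

theorem eq_of_forall_sum_mul_log_eq_zero (D : InfinitePlace K → ℝ)
    (hD : ∀ v : (𝓞 K)ˣ, ∑ w, D w * (mult w * Real.log (w v)) = 0) (w : InfinitePlace K) :
    D w = D w₀ := by
  classical
  let φ : logSpace K →ₗ[ℝ] ℝ := ∑ w, (D w.1 - D w₀) • LinearMap.proj w
  have hφ : ∀ x, φ x = ∑ w, (D w.1 - D w₀) * x w := fun x => by simp [φ]
  have hφ_log : ∀ v : (𝓞 K)ˣ, φ (logEmbedding K (Additive.ofMul v)) = 0 := by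
    intro v
    have hsum := hD v
    rw [Fintype.sum_eq_add_sum_subtype_ne _ w₀] at hsum
    have hw₀ := sum_logEmbedding_component v
    simp only [logEmbedding_component] at hw₀
    simp only [hφ, sub_mul, Finset.sum_sub_distrib, ← Finset.mul_sum, hw₀, logEmbedding_component]
    linarith
  have hφ_zero : φ = 0 := by
    refine LinearMap.ext_on (unitLattice_span_eq_top K) ?_
    rintro _ ⟨y, -, rfl⟩
    exact hφ_log (Additive.toMul y)
  by_cases hw : w = w₀
  · rw [hw]
  · have := congrArg (· (Pi.single ⟨w, hw⟩ 1)) hφ_zero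
    simpa [hφ, Pi.single_apply, sub_eq_zero] using this

end NumberField.Units

namespace NumberField.InfinitePlace

variable {F : Type*} [Field F]

theorem _root_.NumberField.ComplexEmbedding.isReal_ofRealHom_comp (φ : F →+* ℝ) :
    ComplexEmbedding.IsReal (Complex.ofRealHom.comp φ) := by
  ext x
  simp [ComplexEmbedding.conjugate_coe_eq, Complex.conj_ofReal]

theorem isReal_mk_ofRealHom_comp (φ : F →+* ℝ) : IsReal (mk (Complex.ofRealHom.comp φ)) :=
  isReal_mk_iff.mpr (ComplexEmbedding.isReal_ofRealHom_comp φ)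

theorem mk_ofRealHom_comp_injective :
    Function.Injective fun φ : F →+* ℝ => mk (Complex.ofRealHom.comp φ) := by
  intro φ ψ h
  have hcomp : Complex.ofRealHom.comp φ = Complex.ofRealHom.comp ψ := by
    rcases mk_eq_iff.mp h with h | h
    · exact h
    · rwa [ComplexEmbedding.isReal_iff.mp (ComplexEmbedding.isReal_ofRealHom_comp φ)] at h
  ext x
  exact Complex.ofReal_injective (RingHom.congr_fun hcomp x)

theorem card_le_finrank [NumberField F] : Fintype.card (InfinitePlace F) ≤ Module.finrank ℚ F := by
  rw [card_eq_nrRealPlaces_add_nrComplexPlaces, ← card_add_two_mul_card_eq_rank]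
  omega

end NumberField.InfinitePlace

theorem realEmbedding_unit_ne_zero {F : Type*} [Field F] (φ : F →+* ℝ) (v : (𝓞 F)ˣ) : φ v ≠ 0 :=
  (map_ne_zero φ).mpr (Units.coe_ne_zero v)

section RealEmbeddings

open InfinitePlace

variable {F : Type*} [Field F] [NumberField F] {n : ℕ} {τ : Fin n → (F →+* ℝ)}

noncomputable def realPlaceEquiv (hn : n = Module.finrank ℚ F) (hτ : Function.Injective τ) :
    Fin n ≃ InfinitePlace F :=
  Equiv.ofBijective (fun i => mk (Complex.ofRealHom.comp (τ i)))
    ((mk_ofRealHom_comp_injective.comp hτ).bijective_of_nat_card_le (by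
      simpa [← hn] using card_le_finrank (F := F)))

theorem realPlaceEquiv_apply (hn : n = Module.finrank ℚ F) (hτ : Function.Injective τ)
    (i : Fin n) (x : F) : realPlaceEquiv hn hτ i x = |τ i x| := by
  simp [realPlaceEquiv, InfinitePlace.apply, Complex.norm_real]

theorem mult_realPlaceEquiv (hn : n = Module.finrank ℚ F) (hτ : Function.Injective τ)
    (i : Fin n) : mult (realPlaceEquiv hn hτ i) = 1 :=
  (isReal_mk_ofRealHom_comp (τ i)).mult_eq_one

theorem prod_abs_realEmbedding_unit_eq_one (hn : n = Module.finrank ℚ F)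
    (hτ : Function.Injective τ) (v : (𝓞 F)ˣ) : ∏ i, |τ i v| = 1 := by
  have h := prod_eq_abs_norm (v : F)
  rw [NumberField.Units.norm, Rat.cast_one, ← (realPlaceEquiv hn hτ).prod_comp] at h
  simpa [realPlaceEquiv_apply, mult_realPlaceEquiv] using h

end RealEmbeddings

section TotallyPositiveUnits

variable {F : Type*} [Field F] [NumberField F] {n : ℕ} {τ : Fin n → (F →+* ℝ)}

theorem sq_mem_totPosUnits (v : (𝓞 F)ˣ) : v ^ 2 ∈ totPosUnits F τ := fun i => by
  simpa using pow_two_pos_of_ne_zero (realEmbedding_unit_ne_zero (τ i) v)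

theorem prod_realEmbedding_eq_one_of_mem_totPosUnits (hn : n = Module.finrank ℚ F)
    (hτ : Function.Injective τ) {u : (𝓞 F)ˣ} (hu : u ∈ totPosUnits F τ) : ∏ i, τ i u = 1 := by
  rw [← prod_abs_realEmbedding_unit_eq_one hn hτ u]
  exact Finset.prod_congr rfl fun i _ => (abs_of_pos (hu i)).symm

theorem sum_mul_log_abs_eq_zero_of_forall_mem_prod_pow_eq_one {Γ : Subgroup (𝓞 F)ˣ}
    (hidx : Γ.relIndex (totPosUnits F τ) ≠ 0)
    {d : Fin n → ℕ} (hd : ∀ u ∈ Γ, ∏ i, τ i u ^ d i = 1) (v : (𝓞 F)ˣ) :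
    ∑ i, (d i : ℝ) * Real.log |τ i v| = 0 := by
  obtain ⟨m, hm, -, hmem⟩ :=
    Subgroup.exists_pow_mem_of_relIndex_ne_zero hidx (sq_mem_totPosUnits (τ := τ) v)
  have h := congrArg Real.log (hd _ hmem.1)
  simp only [Units.val_pow_eq_pow_val, map_pow, ← pow_mul] at h
  rw [Real.log_one, Real.log_prod fun i _ => pow_ne_zero _ (realEmbedding_unit_ne_zero (τ i) v)]
    at h
  have h2m : ((2 * m : ℕ) : ℝ) ≠ 0 := by positivity
  refine (mul_eq_zero.mp ?_).resolve_left h2m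
  rw [Finset.mul_sum, ← h]
  refine Finset.sum_congr rfl fun i _ => ?_
  rw [Real.log_abs, Real.log_pow]
  push_cast
  ring

theorem eq_of_forall_mem_prod_pow_eq_one (hn : n = Module.finrank ℚ F)
    (hτ : Function.Injective τ) {Γ : Subgroup (𝓞 F)ˣ}
    (hidx : Γ.relIndex (totPosUnits F τ) ≠ 0) {d : Fin n → ℕ}
    (hd : ∀ u ∈ Γ, ∏ i, τ i u ^ d i = 1) (i j : Fin n) : d i = d j := by
  let q := realPlaceEquiv hn hτ
  have hconst := Units.eq_of_forall_sum_mul_log_eq_zero (fun w => (d (q.symm w) : ℝ))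
    fun v => by
      rw [← q.sum_comp]
      simpa [q, realPlaceEquiv_apply, mult_realPlaceEquiv] using
        sum_mul_log_abs_eq_zero_of_forall_mem_prod_pow_eq_one hidx hd v
  have hi := hconst (q i)
  have hj := hconst (q j)
  simp only [Equiv.symm_apply_apply] at hi hj
  exact_mod_cast hi.trans hj.symm

theorem forall_mem_prod_pow_eq_one_iff (hn : n = Module.finrank ℚ F) (hτ : Function.Injective τ)
    {Γ : Subgroup (𝓞 F)ˣ} (hΓ : Γ ≤ totPosUnits F τ) (hidx : Γ.relIndex (totPosUnits F τ) ≠ 0)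
    (d : Fin n → ℕ) : (∀ u ∈ Γ, ∏ i, τ i u ^ d i = 1) ↔ ∀ i j, d i = d j := by
  refine ⟨eq_of_forall_mem_prod_pow_eq_one hn hτ hidx, fun hd u hu => ?_⟩
  rcases isEmpty_or_nonempty (Fin n) with _ | ⟨⟨i₀⟩⟩
  · simp
  · rw [Finset.prod_congr rfl fun i _ => by rw [hd i i₀], Finset.prod_pow,
      prod_realEmbedding_eq_one_of_mem_totPosUnits hn hτ (hΓ hu), one_pow]

end TotallyPositiveUnits

/-- Let `Γ` be a finite-index subgroup of the totally positive units of a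
totally real field `F` of degree `n`, acting on `ℂ[[z_1, …, z_n]]` by
`u · z_i = τ_i(u) z_i`.  A power series is `Γ`-invariant iff its coefficients at all
non-constant multidegrees vanish, i.e. the invariant subring is `ℂ[[w]]` with
`w = z_1 ⋯ z_n`. -/
theorem statement16 (F : Type*) [Field F] [NumberField F]
    (n : ℕ) (hn : n = Module.finrank ℚ F) (hn0 : 0 < n)
    (τ : Fin n → (F →+* ℝ)) (hτ : Function.Bijective τ)
    (Γ : Subgroup (𝓞 F)ˣ) (hΓ : Γ ≤ totPosUnits F τ)
    (hidx : Γ.relIndex (totPosUnits F τ) ≠ 0)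
    (f : MvPowerSeries (Fin n) ℂ) :
    ((∀ u ∈ Γ, diagAct (fun i => τ i (algebraMap (𝓞 F) F u)) f = f) ↔
      (∀ d : Fin n →₀ ℕ, ¬(∀ i j, d i = d j) → MvPowerSeries.coeff d f = 0)) ∧
    ((∀ u ∈ Γ, diagAct (fun i => τ i (algebraMap (𝓞 F) F u)) f = f) ↔
      (∃ c : ℕ → ℂ, ∀ d : Fin n →₀ ℕ,
        MvPowerSeries.coeff d f =
          if ∀ i j, d i = d j then c (d ⟨0, hn0⟩) else 0)) := by
  have hinv : (∀ u ∈ Γ, diagAct (fun i => τ i (algebraMap (𝓞 F) F u)) f = f) ↔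
      ∀ d : Fin n →₀ ℕ, ¬(∀ i j, d i = d j) → MvPowerSeries.coeff d f = 0 :=
    calc (∀ u ∈ Γ, diagAct (fun i => τ i (algebraMap (𝓞 F) F u)) f = f)
        ↔ ∀ d : Fin n →₀ ℕ, MvPowerSeries.coeff d f ≠ 0 →
            ∀ u ∈ Γ, ∏ i, τ i (algebraMap (𝓞 F) F u) ^ d i = 1 := by
          simp only [diagAct_eq_self_iff]
          exact ⟨fun h d hd u hu => h u hu d hd, fun h u hu d hd => h d hd u hu⟩
      _ ↔ ∀ d : Fin n →₀ ℕ, MvPowerSeries.coeff d f ≠ 0 → ∀ i j, d i = d j := by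
          simp only [forall_mem_prod_pow_eq_one_iff hn hτ.injective hΓ hidx]
      _ ↔ _ := forall_congr' fun d => not_imp_comm
  exact ⟨hinv, hinv.trans (MvPowerSeries.exists_coeff_eq_ite_iff f ⟨0, hn0⟩).symm⟩
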